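/- arXiv:2205.08920 — 4 statements merged into one kernel-verified Lean document; each statement's English description precedes it below -/
import Mathlib

section
/- For all integers k ≥ 1 and 1 ≤ m ≤ 2k, the m-th iterate of the operation ¬ of the matrix M_k applied to k+2 satisfies: ¬^m(k+2) = (k+2) + m/2 if m is even, and ¬^m(k+2) = 1 + (m+1)/2 if m is odd. -/
/-- Carrier V_k = {1,…,2(k+1)} of the matrix M_k. -/
def Vk (k : ℕ) : Set ℕ := {x | 1 ≤ x ∧ x ≤ 2 * (k + 1)}
/-- Designated set D_k = {k+2,…,2(k+1)} of the matrix M_k. -/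
def Dk (k : ℕ) : Set ℕ := {x | k + 2 ≤ x ∧ x ≤ 2 * (k + 1)}

instance (k x : ℕ) : Decidable (x ∈ Dk k) :=
  inferInstanceAs (Decidable (k + 2 ≤ x ∧ x ≤ 2 * (k + 1)))

/-- Disjunction of M_k: 1 if both arguments are undesignated, k+2 otherwise. -/
def mOr (k x y : ℕ) : ℕ := if x ∉ Dk k ∧ y ∉ Dk k then 1 else k + 2
/-- Conjunction of M_k: k+2 if both arguments are designated, 1 otherwise. -/
def mAnd (k x y : ℕ) : ℕ := if x ∈ Dk k ∧ y ∈ Dk k then k + 2 else 1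
/-- Implication of M_k: 1 if the first argument is designated and the second is not,
k+2 otherwise. -/
def mImp (k x y : ℕ) : ℕ := if x ∈ Dk k ∧ y ∉ Dk k then 1 else k + 2
/-- Consistency operator of M_k: 1 at 2(k+1), k+2 elsewhere. -/
def mCirc (k x : ℕ) : ℕ := if x = 2 * (k + 1) then 1 else k + 2
/-- Negation of M_k: ¬x = k+2 if x ∈ {1, 2(k+1)}; ¬x = x + (k+1) if 2 ≤ x ≤ k+1;
¬x = x − k if k+2 ≤ x ≤ 2k+1 (values outside the carrier are irrelevant). -/
def mNeg (k x : ℕ) : ℕ :=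
  if x = 1 ∨ x = 2 * (k + 1) then k + 2
  else if 2 ≤ x ∧ x ≤ k + 1 then x + (k + 1)
  else if k + 2 ≤ x ∧ x ≤ 2 * k + 1 then x - k
  else x

/-- value of the iterated negation of M_k at k+2. -/
theorem stmt3 (k : ℕ) (hk : 1 ≤ k) (m : ℕ) (hm1 : 1 ≤ m) (hm2 : m ≤ 2 * k) :
    (mNeg k)^[m] (k + 2) =
      if Even m then (k + 2) + m / 2 else 1 + (m + 1) / 2 := by

  induction m with
  | zero => omega
  | succ n ih =>
    rcases Nat.eq_zero_or_pos n with h0 | h0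
    · subst h0
      rw [Function.iterate_succ_apply', Function.iterate_zero_apply]
      unfold mNeg
      rw [if_neg (by omega), if_neg (by omega), if_pos (by omega)]
      rw [if_neg (by decide)]
      omega
    · have ih' := ih h0 (by omega)
      rw [Function.iterate_succ_apply', ih']
      rcases Nat.even_or_odd n with he | ho
      · rw [if_pos he]
        have he2 := he
        obtain ⟨a, ha⟩ := he
        have hn : n = 2 * a := by omega
        have ha2 : a ≤ k - 1 := by omega
        unfold mNeg
        rw [if_neg (by omega), if_neg (by omega), if_pos (by omega)]
        rw [if_neg (by simp [Nat.even_add_one, he2])]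
        omega
      · have hne : ¬ Even n := Nat.not_even_iff_odd.mpr ho
        rw [if_neg hne]
        obtain ⟨a, ha⟩ := ho
        unfold mNeg
        rw [if_neg (by omega), if_pos (by omega)]
        rw [if_pos (Nat.even_add_one.mpr hne)]
        omega
end

section
/- For every integer k ≥ 1, every 0 ≤ j ≤ 2k−1, and every x ∈ V_k, the value of the formula ∘¬^j∘p in M_k at x is designated: ∘(¬^j(∘x)) ∈ D_k. -/
/-- the axioms ∘¬^j∘p, 0 ≤ j ≤ 2k−1, are designated in M_k at
every point of the carrier. -/
theorem stmt7 (k : ℕ) (hk : 1 ≤ k) (j : ℕ) (hj : j ≤ 2 * k - 1)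
    (x : ℕ) (hx : x ∈ Vk k) :
    mCirc k ((mNeg k)^[j] (mCirc k x)) ∈ Dk k := by
  have key : ∀ i, i ≤ 2 * k - 1 →
      (mNeg k)^[i] (k + 2) = if i % 2 = 0 then k + 2 + i / 2 else i / 2 + 2 := by
    intro i
    induction i with
    | zero => intro _; simp
    | succ n ih =>
      intro hn
      have hn' : n ≤ 2 * k - 1 := by omega
      rw [Function.iterate_succ_apply', ih hn']
      rcases Nat.even_or_odd n with he | ho
      · have h0 : n % 2 = 0 := Nat.even_iff.mp he
        have hle : n ≤ 2 * k - 2 := by omega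
        rw [if_pos h0, if_neg (show ¬(n+1) % 2 = 0 by omega)]
        unfold mNeg
        rw [if_neg (by omega), if_neg (by omega), if_pos (by omega)]
        omega
      · have h1 : n % 2 = 1 := Nat.odd_iff.mp ho
        simp only [h1]
        rw [if_neg (by omega), if_pos (by omega)]
        unfold mNeg
        rw [if_neg (by omega), if_pos (by omega)]
        omega
  have hne : (mNeg k)^[j] (mCirc k x) ≠ 2 * (k + 1) := by
    unfold mCirc
    split
    · -- mCirc k x = 1
      cases j with
      | zero => simp; omega
      | succ n =>
        rw [Function.iterate_succ_apply]
        have h1 : mNeg k 1 = k + 2 := by unfold mNeg; rw [if_pos (Or.inl rfl)]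
        rw [h1, key n (by omega)]
        split <;> omega
    · rw [key j hj]
      split <;> omega
  unfold mCirc at hne ⊢
  rw [if_neg hne]
  constructor <;> omega
end

section
/- For every integer k ≥ 1, the axiom schema ∘¬^{2k}∘p fails in M_k at the value 1: ∘(¬^{2k}(∘1)) = 1, and 1 ∉ D_k. -/
lemma mNeg_lo (k x : ℕ) (h1 : 2 ≤ x) (h2 : x ≤ k + 1) : mNeg k x = x + (k + 1) := by
  unfold mNeg
  rw [if_neg, if_pos ⟨h1, h2⟩]
  rintro (h | h) <;> omega

lemma mNeg_hi (k x : ℕ) (h1 : k + 2 ≤ x) (h2 : x ≤ 2 * k + 1) : mNeg k x = x - k := by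
  unfold mNeg
  rw [if_neg, if_neg, if_pos ⟨h1, h2⟩]
  · rintro ⟨a, b⟩; omega
  · rintro (h | h) <;> omega

lemma iter_pair (k : ℕ) : ∀ i, i < k → (mNeg k)^[2 * i] (k + 2) = k + 2 + i := by
  intro i
  induction i with
  | zero => simp
  | succ n ih =>
    intro h
    have h2 : 2 * (n + 1) = 2 * n + 1 + 1 := by ring
    rw [h2, Function.iterate_succ_apply', Function.iterate_succ_apply',
      ih (by omega), mNeg_hi k (k + 2 + n) (by omega) (by omega)]
    have : k + 2 + n - k = n + 2 := by omega
    rw [this, mNeg_lo k (n + 2) (by omega) (by omega)]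
    omega

/-- the axiom ∘¬^{2k}∘p fails in M_k at the value 1. -/
theorem stmt8 (k : ℕ) (hk : 1 ≤ k) :
    mCirc k ((mNeg k)^[2 * k] (mCirc k 1)) = 1 ∧ (1 : ℕ) ∉ Dk k := by
  constructor
  · have h1 : mCirc k 1 = k + 2 := by
      unfold mCirc; rw [if_neg (by omega)]
    rw [h1]
    have h2 : 2 * k = 2 * (k - 1) + 1 + 1 := by omega
    rw [h2, Function.iterate_succ_apply', Function.iterate_succ_apply',
      iter_pair k (k - 1) (by omega)]
    have : k + 2 + (k - 1) = 2 * k + 1 := by omega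
    rw [this, mNeg_hi k (2 * k + 1) (by omega) (by omega)]
    have : 2 * k + 1 - k = k + 1 := by omega
    rw [this, mNeg_lo k (k + 1) (by omega) (by omega)]
    unfold mCirc
    rw [if_pos (by omega)]
  · intro h
    exact absurd h.1 (by omega)
end

section
/- Let M = ⟨A, D⟩ and M' = ⟨A, D'⟩ be nd-matrices over the same nd-algebra A with carrier V, and let U ⊆ V × V contain all and only the pairs of distinct truth-values that have no separator in M. If every pair in U has a separator in M', then every pair of distinct truth-values of V has a separator in the B-product M ⊗ M' = ⟨A, D, D'⟩; i.e., M ⊗ M' is sufficiently expressive. -/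
/-- Formulas over an arbitrary propositional signature `Con` (where `Con n` is
the type of n-ary connectives), generated from a denumerable set of variables. -/
inductive GFm (Con : ℕ → Type) : Type where
  | var : ℕ → GFm Con
  | app : (n : ℕ) → Con n → (Fin n → GFm Con) → GFm Con

/-- Valuations on an nd-algebra with interpretation `interp` on carrier `V`. -/
def IsGVal {Con : ℕ → Type} {V : Type}
    (interp : {n : ℕ} → Con n → (Fin n → V) → Set V) (v : GFm Con → V) : Prop :=
  ∀ (n : ℕ) (c : Con n) (args : Fin n → GFm Con),
    v (.app n c args) ∈ interp c (fun i => v (args i))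

/-- The set of variables occurring in a formula. -/
def gvars {Con : ℕ → Type} : GFm Con → Set ℕ
  | .var n => {n}
  | .app _ _ args => ⋃ i, gvars (args i)

/-- Unary formulas: formulas over the single variable `var 0`. -/
def GUnary {Con : ℕ → Type} (ψ : GFm Con) : Prop := gvars ψ ⊆ {0}

/-- ψ^A(x): the set of values of ψ over valuations sending `var 0` to x. -/
def gImage {Con : ℕ → Type} {V : Type}
    (interp : {n : ℕ} → Con n → (Fin n → V) → Set V) (ψ : GFm Con) (x : V) :
    Set V :=
  {w | ∃ v : GFm Con → V, IsGVal interp v ∧ v (.var 0) = x ∧ v ψ = w}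

/-- ψ separates the pair (x,y) with respect to the distinguished set `D`:
ψ^A(x) ⊆ D and ψ^A(y) ⊆ V∖D, or vice versa. -/
def GSep {Con : ℕ → Type} {V : Type}
    (interp : {n : ℕ} → Con n → (Fin n → V) → Set V) (D : Set V)
    (ψ : GFm Con) (x y : V) : Prop :=
  (gImage interp ψ x ⊆ D ∧ gImage interp ψ y ⊆ Dᶜ) ∨
  (gImage interp ψ y ⊆ D ∧ gImage interp ψ x ⊆ Dᶜ)

/-- if `U` consists of exactly the pairs of distinct truth-values
with no separator in M = ⟨A,D⟩, and every pair in `U` has a separator in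
M' = ⟨A,D'⟩, then every pair of distinct truth-values has a separator in the
B-product M ⊗ M' = ⟨A,D,D'⟩, i.e. M ⊗ M' is sufficiently expressive. -/
theorem stmt18 {Con : ℕ → Type} {V : Type}
    (interp : {n : ℕ} → Con n → (Fin n → V) → Set V)
    (D D' : Set V) (U : Set (V × V))
    (hU : ∀ x y : V,
      (x, y) ∈ U ↔ x ≠ y ∧ ¬ ∃ ψ : GFm Con, GUnary ψ ∧ GSep interp D ψ x y)
    (hsep : ∀ p ∈ U, ∃ ψ : GFm Con, GUnary ψ ∧ GSep interp D' ψ p.1 p.2) :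
    ∀ x y : V, x ≠ y →
      ∃ ψ : GFm Con, GUnary ψ ∧ (GSep interp D ψ x y ∨ GSep interp D' ψ x y) := by
  intro x y hxy
  by_cases h : ∃ ψ : GFm Con, GUnary ψ ∧ GSep interp D ψ x y
  · obtain ⟨ψ, hu, hs⟩ := h
    exact ⟨ψ, hu, Or.inl hs⟩
  · obtain ⟨ψ, hu, hs⟩ := hsep (x, y) ((hU x y).mpr ⟨hxy, h⟩)
    exact ⟨ψ, hu, Or.inr hs⟩
end
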